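/- arXiv:2008.06542 — 2 statements merged into one kernel-verified Lean document; each statement's English description precedes it below -/
import Mathlib

section
/- Let λ > 0 and let z ∈ ℝ^m satisfy z₁ ≥ z₂ ≥ … ≥ z_m ≥ 0. Then every global minimizer σ̃ of σ ↦ (1/2)‖σ − z‖₂² + λ(‖σ‖₁ − ‖σ‖₂) satisfies 0 ≤ σ̃ᵢ ≤ zᵢ for every i (shrinkage: the proximal operator of the ℓ₁-minus-ℓ₂ penalty never increases any component of a sorted non-negative input). -/
/-!
If `σ̃ᵢ` lay outside `[0, zᵢ]`, replace it by the nearest endpoint `c`. This strictly decreases the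
fidelity term. Since `c` lies between `0` and `σ̃ᵢ`, the ℓ₁ norm drops by exactly `|σ̃ᵢ - c|`, while by
the triangle inequality the ℓ₂ norm drops by at most `|σ̃ᵢ - c|`; so the penalty `‖·‖₁ - ‖·‖₂` does
not increase, contradicting minimality.
-/

open Function

noncomputable section

variable {ι : Type*} [Fintype ι] [DecidableEq ι]

theorem sum_comp_update_add {α : Type*} (g : α → ℝ) (x : ι → α) (i : ι) (c : α) :
    ∑ j, g (update x i c j) + g (x i) = ∑ j, g (x j) + g c := by
  simp only [← comp_apply (f := g), comp_update]
  rw [Finset.sum_update_of_mem (Finset.mem_univ i), Finset.sdiff_singleton_eq_erase,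
    Finset.sum_erase_eq_sub (Finset.mem_univ i)]
  simp only [comp_apply]
  ring

theorem sqrt_sum_sq_le_sqrt_sum_sq_update_add_abs (x : ι → ℝ) (i : ι) (c : ℝ) :
    √(∑ j, x j ^ 2) ≤ √(∑ j, update x i c j ^ 2) + |x i - c| := by
  have hsplit : update x i c + Pi.single i (x i - c) = x := by
    ext j; rcases eq_or_ne j i with rfl | hj <;> simp [*]
  have h := norm_add_le (E := EuclideanSpace ℝ ι) (WithLp.toLp 2 (update x i c))
    (WithLp.toLp 2 (Pi.single i (x i - c)))
  rw [← WithLp.toLp_add, hsplit] at h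
  simpa [EuclideanSpace.norm_eq] using h

theorem abs_add_abs_sub_of_mem_uIcc {a c : ℝ} (hc : c ∈ Set.uIcc 0 a) :
    |c| + |a - c| = |a| := by
  rcases Set.mem_uIcc.1 hc with ⟨h0, ha⟩ | ⟨ha, h0⟩
  · rw [abs_of_nonneg h0, abs_of_nonneg (sub_nonneg.2 ha), abs_of_nonneg (h0.trans ha)]; ring
  · rw [abs_of_nonpos h0, abs_of_nonpos (sub_nonpos.2 ha), abs_of_nonpos (ha.trans h0)]; ring

def l1SubL2 (x : ι → ℝ) : ℝ := ∑ i, |x i| - √(∑ i, x i ^ 2)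

theorem l1SubL2_update_le_of_mem_uIcc {x : ι → ℝ} {i : ι} {c : ℝ} (hc : c ∈ Set.uIcc 0 (x i)) :
    l1SubL2 (update x i c) ≤ l1SubL2 x := by
  have hl1 := sum_comp_update_add (fun t : ℝ ↦ |t|) x i c
  have hl2 := sqrt_sum_sq_le_sqrt_sum_sq_update_add_abs x i c
  have habs := abs_add_abs_sub_of_mem_uIcc hc
  simp only [l1SubL2]
  linarith

def proxObjective (lam : ℝ) (z x : ι → ℝ) : ℝ :=
  1 / 2 * ∑ i, (x i - z i) ^ 2 + lam * l1SubL2 x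

theorem proxObjective_update_lt {lam : ℝ} (hlam : 0 ≤ lam) {z x : ι → ℝ} {i : ι} {c : ℝ}
    (hc : c ∈ Set.uIcc 0 (x i)) (hfit : (c - z i) ^ 2 < (x i - z i) ^ 2) :
    proxObjective lam z (update x i c) < proxObjective lam z x := by
  have hfit_sum : ∑ j, (update x i c j - z j) ^ 2 < ∑ j, (x j - z j) ^ 2 := by
    refine Finset.sum_lt_sum (fun j _ ↦ ?_) ⟨i, Finset.mem_univ i, by simpa using hfit⟩
    rcases eq_or_ne j i with rfl | hj
    · simpa using hfit.le
    · simp [hj]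
  have hpen := mul_le_mul_of_nonneg_left (l1SubL2_update_le_of_mem_uIcc hc) hlam
  simp only [proxObjective]
  linarith

end

theorem l1_minus_l2_prox_shrinkage_general
    {m : ℕ} (lam : ℝ) (hlam : 0 < lam)
    (z : Fin m → ℝ)
    (hz_nonneg : ∀ i, 0 ≤ z i)
    (σt : Fin m → ℝ)
    (hσt_min : ∀ τ : Fin m → ℝ,
      (1 / 2) * (∑ i, (σt i - z i) ^ 2)
          + lam * ((∑ i, |σt i|) - Real.sqrt (∑ i, (σt i) ^ 2))
        ≤ (1 / 2) * (∑ i, (τ i - z i) ^ 2)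
          + lam * ((∑ i, |τ i|) - Real.sqrt (∑ i, (τ i) ^ 2))) :
    ∀ i : Fin m, 0 ≤ σt i ∧ σt i ≤ z i := by
  intro i
  by_contra hout
  rw [not_and_or, not_le, not_le] at hout
  have hmin : ∀ τ, proxObjective lam z σt ≤ proxObjective lam z τ := hσt_min
  rcases hout with hneg | hgt
  · refine (hmin _).not_gt (proxObjective_update_lt hlam.le (i := i) (c := 0) ?_ ?_)
    · exact Set.left_mem_uIcc
    · nlinarith [hz_nonneg i]
  · refine (hmin _).not_gt (proxObjective_update_lt hlam.le (i := i) (c := z i) ?_ ?_)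
    · exact Set.mem_uIcc_of_le (hz_nonneg i) hgt.le
    · nlinarith

/-- shrinkage: If `λ > 0`, `z₁ ≥ z₂ ≥ … ≥ z_m ≥ 0`, and `σ̃` globally
minimizes `σ ↦ (1/2)‖σ - z‖₂² + λ(‖σ‖₁ - ‖σ‖₂)`, then `0 ≤ σ̃ᵢ ≤ zᵢ` for every `i`. -/
theorem l1_minus_l2_prox_shrinkage
    {m : ℕ} (lam : ℝ) (hlam : 0 < lam)
    (z : Fin m → ℝ)
    (hz_nonneg : ∀ i, 0 ≤ z i)
    (hz_sorted : ∀ i j : Fin m, i ≤ j → z j ≤ z i)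
    (σt : Fin m → ℝ)
    (hσt_min : ∀ τ : Fin m → ℝ,
      (1 / 2) * (∑ i, (σt i - z i) ^ 2)
          + lam * ((∑ i, |σt i|) - Real.sqrt (∑ i, (σt i) ^ 2))
        ≤ (1 / 2) * (∑ i, (τ i - z i) ^ 2)
          + lam * ((∑ i, |τ i|) - Real.sqrt (∑ i, (τ i) ^ 2))) :
    ∀ i : Fin m, 0 ≤ σt i ∧ σt i ≤ z i :=
  l1_minus_l2_prox_shrinkage_general lam hlam z hz_nonneg σt hσt_min
end

section
/- Let X ∈ ℝ^{m×n} have rank at most k. Then there exist W ∈ ℝ^{m×k} and H ∈ ℝ^{n×k} such that X = W Hᵀ and (1/2)(‖W‖_F² + ‖H‖_F²) = ‖X‖_*. -/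
open scoped Matrix

/-- Frobenius norm of a real matrix. -/
noncomputable def frobNorm {m n : ℕ} (X : Matrix (Fin m) (Fin n) ℝ) : ℝ :=
  Real.sqrt (∑ i, ∑ j, (X i j) ^ 2)

/-- Nuclear norm of a real matrix: the sum of its singular values, i.e. the sum of the
square roots of the eigenvalues of `Xᴴ * X`. -/
noncomputable def nuclearNorm {m n : ℕ} (X : Matrix (Fin m) (Fin n) ℝ) : ℝ :=
  ∑ i, Real.sqrt ((Matrix.isHermitian_conjTranspose_mul_self X).eigenvalues i)

/-!
Diagonalize `XᵀX = V diag(d) Vᵀ` with `V` orthogonal. Then `B = X V` has orthogonal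
columns `b_j` with `‖b_j‖ = √d_j = σ_j`, and `X = B Vᵀ = ∑ b_j v_jᵀ`. Rescaling each
rank-one term as `(b_j / √σ_j) (√σ_j v_j)ᵀ` balances the two factors: each then has
squared Frobenius norm `∑ σ_j = ‖X‖_*`. Only the `rank X ≤ k` columns with `σ_j ≠ 0`
are nonzero, so after dropping the others the factors fit into `k` columns.
-/

theorem Fintype.sum_eq_sum_of_embedding_subtype {ι κ R : Type*} [Fintype ι] [Fintype κ]
    [AddCommMonoid R] {p : ι → Prop} {f : ι → R} {g : κ → R} (e : {j // p j} ↪ κ)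
    (hf : ∀ j, ¬ p j → f j = 0) (hg : ∀ c ∉ Set.range e, g c = 0)
    (hfg : ∀ j : {j // p j}, f j = g (e j)) : ∑ j, f j = ∑ c, g c := by
  classical
  exact (Fintype.sum_of_injective Subtype.val Subtype.val_injective (f ∘ Subtype.val) f
      (fun j hj => hf j fun hp => hj ⟨⟨j, hp⟩, rfl⟩) fun _ => rfl).symm.trans
    (Fintype.sum_of_injective e e.injective _ g hg hfg)

namespace Matrix

section ExtendCols

variable {α β ι κ R : Type*} {p : ι → Prop}

noncomputable def extendCols [Zero R] (M : Matrix α ι R) (e : {j // p j} ↪ κ) :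
    Matrix α κ R :=
  of fun a => Function.extend e (fun j => M a j) 0

variable (e : {j // p j} ↪ κ)

theorem extendCols_apply_embedding [Zero R] (M : Matrix α ι R) (a : α) (j : {j // p j}) :
    M.extendCols e a (e j) = M a j :=
  e.injective.extend_apply (fun j => M a j) 0 j

theorem extendCols_apply_of_notMem_range [Zero R] (M : Matrix α ι R) (a : α) {c : κ}
    (hc : c ∉ Set.range e) : M.extendCols e a c = 0 :=
  Function.extend_apply' (f := e) (fun j => M a j) (0 : κ → R) c hc

theorem extendCols_mul_transpose [Fintype ι] [Fintype κ] [NonUnitalNonAssocSemiring R]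
    {M : Matrix α ι R} (N : Matrix β ι R) (hM : ∀ a j, ¬ p j → M a j = 0) :
    M.extendCols e * (N.extendCols e)ᵀ = M * Nᵀ := by
  ext a b
  refine (Fintype.sum_eq_sum_of_embedding_subtype e (fun j hj => ?_) (fun c hc => ?_)
    (fun j => ?_)).symm
  · simp [hM a j hj]
  · simp [extendCols_apply_of_notMem_range e _ _ hc]
  · simp [extendCols_apply_embedding]

theorem sum_extendCols_sq [Fintype ι] [Fintype κ] [Semiring R] {M : Matrix α ι R}
    (hM : ∀ a j, ¬ p j → M a j = 0) (a : α) :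
    ∑ c, M.extendCols e a c ^ 2 = ∑ j, M a j ^ 2 := by
  refine (Fintype.sum_eq_sum_of_embedding_subtype e (fun j hj => ?_) (fun c hc => ?_)
    (fun j => ?_)).symm
  · simp [hM a j hj]
  · simp [extendCols_apply_of_notMem_range e _ _ hc]
  · simp [extendCols_apply_embedding]

end ExtendCols

section Balanced

variable {α β ι : Type*} [Fintype α]

noncomputable def colNorm (B : Matrix α ι ℝ) (j : ι) : ℝ :=
  √(∑ a, B a j ^ 2)

theorem colNorm_nonneg (B : Matrix α ι ℝ) (j : ι) : 0 ≤ B.colNorm j :=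
  Real.sqrt_nonneg _

theorem apply_eq_zero_of_colNorm_eq_zero {B : Matrix α ι ℝ} {j : ι} (h : B.colNorm j = 0)
    (a : α) : B a j = 0 := by
  rw [colNorm, Real.sqrt_eq_zero (by positivity),
    Finset.sum_eq_zero_iff_of_nonneg fun _ _ => sq_nonneg _] at h
  exact pow_eq_zero_iff two_ne_zero |>.mp (h a (Finset.mem_univ a))

-- At a zero column, `x / √0 = x / 0 = 0` already gives the right (zero) entries.
noncomputable def balancedLeft (B : Matrix α ι ℝ) : Matrix α ι ℝ :=
  of fun a j => B a j / √(B.colNorm j)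

noncomputable def balancedRight (B : Matrix α ι ℝ) (U : Matrix β ι ℝ) : Matrix β ι ℝ :=
  of fun b j => √(B.colNorm j) * U b j

theorem balancedLeft_apply_of_colNorm_eq_zero {B : Matrix α ι ℝ} {j : ι}
    (h : B.colNorm j = 0) (a : α) : B.balancedLeft a j = 0 := by
  simp [balancedLeft, apply_eq_zero_of_colNorm_eq_zero h]

theorem balancedRight_apply_of_colNorm_eq_zero {B : Matrix α ι ℝ} {j : ι}
    (U : Matrix β ι ℝ) (h : B.colNorm j = 0) (b : β) : B.balancedRight U b j = 0 := by
  simp [balancedRight, h]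

theorem balancedLeft_mul_transpose_balancedRight [Fintype ι] (B : Matrix α ι ℝ)
    (U : Matrix β ι ℝ) : B.balancedLeft * (B.balancedRight U)ᵀ = B * Uᵀ := by
  ext a b
  refine Finset.sum_congr rfl fun j _ => ?_
  by_cases h : B.colNorm j = 0
  · simp [balancedLeft, balancedRight, h, apply_eq_zero_of_colNorm_eq_zero h]
  · have : √(B.colNorm j) ≠ 0 :=
      (Real.sqrt_pos.mpr ((colNorm_nonneg B j).lt_of_ne' h)).ne'
    simp only [balancedLeft, balancedRight, of_apply, transpose_apply]
    field_simp

theorem sum_balancedLeft_sq (B : Matrix α ι ℝ) (j : ι) :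
    ∑ a, B.balancedLeft a j ^ 2 = B.colNorm j := by
  have hsq : ∑ a, B a j ^ 2 = B.colNorm j ^ 2 := (Real.sq_sqrt (by positivity)).symm
  simp only [balancedLeft, of_apply, div_pow, ← Finset.sum_div, hsq,
    Real.sq_sqrt (colNorm_nonneg B j)]
  rcases eq_or_ne (B.colNorm j) 0 with h | h
  · simp [h]
  · field_simp

theorem sum_balancedRight_sq [Fintype β] (B : Matrix α ι ℝ) {U : Matrix β ι ℝ} {j : ι}
    (hU : ∑ b, U b j ^ 2 = 1) : ∑ b, B.balancedRight U b j ^ 2 = B.colNorm j := by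
  simp only [balancedRight, of_apply, mul_pow, ← Finset.mul_sum, hU, mul_one,
    Real.sq_sqrt (colNorm_nonneg B j)]

end Balanced

section RightSingularVectors

variable {α ι : Type*} [Fintype α] [Fintype ι] [DecidableEq ι]

noncomputable def rightSingularVectors (X : Matrix α ι ℝ) : Matrix ι ι ℝ :=
  (isHermitian_conjTranspose_mul_self X).eigenvectorUnitary

variable (X : Matrix α ι ℝ)

theorem rightSingularVectors_mul_transpose :
    X.rightSingularVectors * X.rightSingularVectorsᵀ = 1 := by
  simpa [rightSingularVectors, star_eq_conjTranspose] using
    Unitary.coe_mul_star_self (isHermitian_conjTranspose_mul_self X).eigenvectorUnitary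

theorem transpose_rightSingularVectors_mul :
    X.rightSingularVectorsᵀ * X.rightSingularVectors = 1 := by
  simpa [rightSingularVectors, star_eq_conjTranspose] using
    Unitary.coe_star_mul_self (isHermitian_conjTranspose_mul_self X).eigenvectorUnitary

theorem sum_rightSingularVectors_sq (j : ι) : ∑ b, X.rightSingularVectors b j ^ 2 = 1 := by
  simpa [mul_apply, sq] using congrFun₂ (transpose_rightSingularVectors_mul X) j j

theorem transpose_mul_self_of_mul_rightSingularVectors :
    (X * X.rightSingularVectors)ᵀ * (X * X.rightSingularVectors) =
      diagonal (isHermitian_conjTranspose_mul_self X).eigenvalues := by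
  have := (isHermitian_conjTranspose_mul_self X).conjStarAlgAut_star_eigenvectorUnitary
  simp only [Unitary.conjStarAlgAut_apply, Unitary.coe_star, star_eq_conjTranspose,
    conjTranspose_eq_transpose_of_trivial, transpose_transpose] at this
  simpa [rightSingularVectors, transpose_mul, Matrix.mul_assoc] using this

theorem colNorm_mul_rightSingularVectors (j : ι) :
    (X * X.rightSingularVectors).colNorm j =
      √((isHermitian_conjTranspose_mul_self X).eigenvalues j) := by
  have := congrFun₂ (transpose_mul_self_of_mul_rightSingularVectors X) j j
  rw [mul_apply] at this
  simp only [transpose_apply, diagonal_apply_eq] at this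
  simp only [colNorm, sq, this]

end RightSingularVectors

end Matrix

open Matrix

theorem frobNorm_sq {m n : ℕ} (M : Matrix (Fin m) (Fin n) ℝ) :
    frobNorm M ^ 2 = ∑ j, ∑ i, M i j ^ 2 := by
  rw [frobNorm, Real.sq_sqrt (by positivity), Finset.sum_comm]

theorem frobNorm_extendCols {m n k : ℕ} {p : Fin n → Prop} (e : {j // p j} ↪ Fin k)
    {M : Matrix (Fin m) (Fin n) ℝ} (hM : ∀ a j, ¬ p j → M a j = 0) :
    frobNorm (M.extendCols e) = frobNorm M := by
  simp only [frobNorm, sum_extendCols_sq e hM]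

theorem nuclearNorm_eq_sum_colNorm {m n : ℕ} (X : Matrix (Fin m) (Fin n) ℝ) :
    nuclearNorm X = ∑ j, (X * X.rightSingularVectors).colNorm j := by
  simp only [nuclearNorm, colNorm_mul_rightSingularVectors]

/-- If `X ∈ ℝ^{m×n}` has rank at most `k`, then there exist `W ∈ ℝ^{m×k}`
and `H ∈ ℝ^{n×k}` with `X = W Hᵀ` and `(1/2)(‖W‖_F² + ‖H‖_F²) = ‖X‖_*`. -/
theorem exists_factorization_achieving_nuclearNorm
    {m n : ℕ} (k : ℕ) (X : Matrix (Fin m) (Fin n) ℝ) (hX : X.rank ≤ k) :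
    ∃ (W : Matrix (Fin m) (Fin k) ℝ) (H : Matrix (Fin n) (Fin k) ℝ),
      X = W * Hᵀ ∧ (1 / 2) * ((frobNorm W) ^ 2 + (frobNorm H) ^ 2) = nuclearNorm X := by
  classical
  set hXX := isHermitian_conjTranspose_mul_self X
  set V := X.rightSingularVectors
  set B := X * V
  have hB : ∀ j, ¬ hXX.eigenvalues j ≠ 0 → B.colNorm j = 0 := fun j hj => by
    rw [colNorm_mul_rightSingularVectors, not_not.mp hj, Real.sqrt_zero]
  have hW := fun a j hj => balancedLeft_apply_of_colNorm_eq_zero (hB j hj) a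
  have hH := fun b j hj => balancedRight_apply_of_colNorm_eq_zero V (hB j hj) b
  obtain ⟨e⟩ : Nonempty ({j // hXX.eigenvalues j ≠ 0} ↪ Fin k) := by
    refine Function.Embedding.nonempty_of_card_le ?_
    rwa [Fintype.card_fin, ← hXX.rank_eq_card_non_zero_eigs, rank_conjTranspose_mul_self]
  refine ⟨B.balancedLeft.extendCols e, (B.balancedRight V).extendCols e, ?_, ?_⟩
  · rw [extendCols_mul_transpose e _ hW, balancedLeft_mul_transpose_balancedRight,
      Matrix.mul_assoc, rightSingularVectors_mul_transpose, Matrix.mul_one]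
  · rw [frobNorm_extendCols e hW, frobNorm_extendCols e hH, frobNorm_sq, frobNorm_sq,
      nuclearNorm_eq_sum_colNorm]
    have hV : ∀ j, ∑ b, B.balancedRight V b j ^ 2 = B.colNorm j := fun j =>
      sum_balancedRight_sq B (sum_rightSingularVectors_sq X j)
    simp only [sum_balancedLeft_sq, hV]
    ring
end
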